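/- Let 𝒜 be a finite set with a symmetric neighborhood relation assigning each A ∈ 𝒜 a set Γ(A) ⊆ 𝒜∖{A} with B ∈ Γ(A) iff A ∈ Γ(B), and write Γ⁺(A) = Γ(A) ∪ {A}. Let x : 𝒜 → (0,1) and set x'(B) = x(B)·∏_{C∈Γ(B)}(1 − x(C)). Then for every A ∈ 𝒜, the sum over all proper witness trees τ rooted at A of the weight ∏_{v ∈ V(τ)} x'([v]) is at most x(A)/(1 − x(A)). -/

import Mathlib

/-- A (rooted, vertex-labeled) witness tree over a set `𝒜` of events: a root
label together with a list of subtrees. -/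
inductive WTree (𝒜 : Type) : Type where
  | node : 𝒜 → List (WTree 𝒜) → WTree 𝒜

/-- The label of the root of a witness tree. -/
def WTree.label {𝒜 : Type} : WTree 𝒜 → 𝒜
  | .node a _ => a

mutual
  /-- The weight of a witness tree: the product of `w ([v])` over all its
  vertices `v`. -/
  def WTree.weight {𝒜 : Type} (w : 𝒜 → ℝ) : WTree 𝒜 → ℝ
    | .node a c => w a * WTree.weightList w c
  /-- Product of weights of a list of witness trees. -/
  def WTree.weightList {𝒜 : Type} (w : 𝒜 → ℝ) : List (WTree 𝒜) → ℝ
    | [] => 1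
    | t :: ts => WTree.weight w t * WTree.weightList w ts
end

/-- A witness tree is proper (w.r.t. neighborhoods `Γ`) if the children of any
vertex labeled `B` carry pairwise distinct labels from `Γ⁺(B) = {B} ∪ Γ B`.
The lists of children are canonically sorted strictly increasingly by label
(so each proper witness tree, whose children are unordered but carry distinct
labels, has exactly one representative). -/
inductive WTree.Proper {𝒜 : Type} [LinearOrder 𝒜] (Γ : 𝒜 → Finset 𝒜) : WTree 𝒜 → Prop where
  | node : ∀ (a : 𝒜) (c : List (WTree 𝒜)),
      List.Chain' (fun s t => s.label < t.label) c →
      (∀ t ∈ c, t.label ∈ insert a (Γ a)) →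
      (∀ t ∈ c, WTree.Proper Γ t) →
      WTree.Proper Γ (.node a c)

/-!
Let `S n A` be the weight of the proper witness trees rooted at `A` of depth at most `n`. The
children of the root of such a tree of depth at most `n + 1` carry distinct labels from `Γ⁺(A)`,
and for each label `c` there is either no child labelled `c` or one, whose subtree is counted in
`S n c`; hence `S (n + 1) A ≤ x' A * ∏_{c ∈ Γ⁺(A)} (1 + S n c)`. The bound `x/(1 - x)` is a
fixed point of this recursion, because `1 + x/(1 - x) = 1/(1 - x)` and
`x' A * ∏_{c ∈ Γ⁺(A)} 1/(1 - x c) = x A/(1 - x A)`. So induction on `n` bounds every `S n A`,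
and every finite partial sum of the series is dominated by some `S n A`.
-/

open scoped ENNReal

theorem ENNReal.tsum_list_eq_add {β : Type*} (g : List β → ℝ≥0∞) :
    ∑' L, g L = g [] + ∑' p : β × List β, g (p.1 :: p.2) := by
  have hcons : Function.Injective fun p : β × List β => p.1 :: p.2 :=
    fun _ _ h => Prod.ext (List.cons.inj h).1 (List.cons.inj h).2
  rw [ENNReal.tsum_eq_add_tsum_ite []]
  congr 1
  refine (hcons.tsum_eq ?_).symm.trans (tsum_congr fun p => if_neg (List.cons_ne_nil _ _))
  rintro (_ | ⟨t, L⟩) h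
  · exact absurd (if_pos rfl) h
  · exact ⟨(t, L), rfl⟩

namespace WTree

variable {𝒜 : Type}

mutual
  def depth : WTree 𝒜 → ℕ
    | .node _ c => depthList c + 1
  def depthList : List (WTree 𝒜) → ℕ
    | [] => 0
    | t :: ts => max t.depth (depthList ts)
end

theorem depthList_le_iff {n : ℕ} :
    ∀ {c : List (WTree 𝒜)}, depthList c ≤ n ↔ ∀ t ∈ c, t.depth ≤ n
  | [] => by simp [depthList]
  | t :: ts => by simp [depthList, depthList_le_iff (c := ts)]

theorem depth_node_le_succ_iff {a : 𝒜} {c : List (WTree 𝒜)} {n : ℕ} :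
    (node a c).depth ≤ n + 1 ↔ ∀ t ∈ c, t.depth ≤ n := by
  rw [depth, Nat.add_le_add_iff_right, depthList_le_iff]

theorem depth_pos (t : WTree 𝒜) : 0 < t.depth := by
  cases t; simp [depth]

theorem node_injective (a : 𝒜) : Function.Injective (node a) := fun _ _ h => by
  cases h; rfl

mutual
  theorem weight_nonneg {w : 𝒜 → ℝ} (hw : ∀ a, 0 ≤ w a) : ∀ t : WTree 𝒜, 0 ≤ t.weight w
    | .node a c => by
        rw [weight]; exact mul_nonneg (hw a) (weightList_nonneg hw c)
  theorem weightList_nonneg {w : 𝒜 → ℝ} (hw : ∀ a, 0 ≤ w a) :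
      ∀ L : List (WTree 𝒜), 0 ≤ weightList w L
    | [] => by rw [weightList]; exact zero_le_one
    | t :: ts => by
        rw [weightList]; exact mul_nonneg (weight_nonneg hw t) (weightList_nonneg hw ts)
end

variable [LinearOrder 𝒜] (Γ : 𝒜 → Finset 𝒜)

def properUpTo (n : ℕ) (A : 𝒜) : Set (WTree 𝒜) :=
  {t | Proper Γ t ∧ t.label = A ∧ t.depth ≤ n}

/-- `ℓ` is the increasing list of admissible child labels; children of a proper vertex have
strictly increasing labels, so their label list is a sublist of `ℓ`. -/
def childListsUpTo (n : ℕ) (ℓ : List 𝒜) : Set (List (WTree 𝒜)) :=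
  {L | (L.map label).Sublist ℓ ∧ ∀ t ∈ L, Proper Γ t ∧ t.depth ≤ n}

theorem children_mem_childListsUpTo {n : ℕ} {A : 𝒜} {c : List (WTree 𝒜)}
    (h : node A c ∈ properUpTo Γ (n + 1) A) :
    c ∈ childListsUpTo Γ n ((insert A (Γ A)).sort) := by
  obtain ⟨hp, -, hdepth⟩ := h
  cases hp with
  | node _ _ hchain hlabel hproper =>
    have hsorted : (c.map label).Pairwise (· < ·) :=
      List.isChain_iff_pairwise.1 ((List.isChain_map label).2 hchain)
    have hsub : c.map label ⊆ (insert A (Γ A)).sort := by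
      simpa [List.subset_def, Finset.mem_sort] using hlabel
    exact ⟨List.sublist_of_subperm_of_pairwise (List.subperm_of_subset hsorted.nodup hsub)
        (hsorted.imp le_of_lt) (Finset.pairwise_sort _ _),
      fun t ht => ⟨hproper t ht, depth_node_le_succ_iff.1 hdepth t ht⟩⟩

variable (w : 𝒜 → ℝ)

noncomputable def weightSumUpTo (n : ℕ) (A : 𝒜) : ℝ≥0∞ :=
  ∑' t, (properUpTo Γ n A).indicator (fun t => ENNReal.ofReal (t.weight w)) t

noncomputable def childWeightSum (n : ℕ) (ℓ : List 𝒜) : ℝ≥0∞ :=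
  ∑' L, (childListsUpTo Γ n ℓ).indicator (fun L => ENNReal.ofReal (weightList w L)) L

theorem weightSumUpTo_zero (A : 𝒜) : weightSumUpTo Γ w 0 A = 0 := by
  refine ENNReal.tsum_eq_zero.2 fun t => Set.indicator_of_notMem ?_ _
  exact fun ⟨_, _, h⟩ => (t.depth_pos).ne' (Nat.le_zero.1 h)

theorem weightSumUpTo_succ_le {n : ℕ} {A : 𝒜} (hA : 0 ≤ w A) :
    weightSumUpTo Γ w (n + 1) A ≤
      ENNReal.ofReal (w A) * childWeightSum Γ w n ((insert A (Γ A)).sort) := by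
  have hsupp : Function.support ((properUpTo Γ (n + 1) A).indicator
      (fun t => ENNReal.ofReal (t.weight w))) ⊆ Set.range (node A) := by
    rintro ⟨a, c⟩ ht
    obtain ⟨-, rfl, -⟩ := Set.mem_of_indicator_ne_zero ht
    exact ⟨c, rfl⟩
  rw [weightSumUpTo, ← (node_injective A).tsum_eq hsupp, childWeightSum, ← ENNReal.tsum_mul_left]
  refine ENNReal.tsum_le_tsum fun c => ?_
  by_cases hc : node A c ∈ properUpTo Γ (n + 1) A
  · rw [Set.indicator_of_mem hc, Set.indicator_of_mem (children_mem_childListsUpTo Γ hc),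
      weight, ENNReal.ofReal_mul hA]
  · rw [Set.indicator_of_notMem hc]
    exact zero_le

theorem nil_mem_childListsUpTo (n : ℕ) (ℓ : List 𝒜) : [] ∈ childListsUpTo Γ n ℓ :=
  ⟨List.nil_sublist ℓ, by simp⟩

theorem childWeightSum_nil (n : ℕ) : childWeightSum Γ w n [] = 1 := by
  have hnil : childListsUpTo Γ n [] = {[]} := by
    ext L
    simp +contextual [childListsUpTo]
  rw [childWeightSum, hnil, ← tsum_subtype]
  refine (tsum_singleton [] (fun L => ENNReal.ofReal (weightList w L))).trans ?_
  rw [weightList, ENNReal.ofReal_one]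

/-- Either the label list skips `b`, or the first tree is rooted at `b`. -/
theorem childListsUpTo_cons_indicator_le (hw : ∀ a, 0 ≤ w a) (n : ℕ) (b : 𝒜) (ℓ : List 𝒜)
    (t : WTree 𝒜) (L : List (WTree 𝒜)) :
    (childListsUpTo Γ n (b :: ℓ)).indicator (fun L => ENNReal.ofReal (weightList w L)) (t :: L) ≤
      (childListsUpTo Γ n ℓ).indicator (fun L => ENNReal.ofReal (weightList w L)) (t :: L) +
      (properUpTo Γ n b).indicator (fun t => ENNReal.ofReal (t.weight w)) t *
        (childListsUpTo Γ n ℓ).indicator (fun L => ENNReal.ofReal (weightList w L)) L := by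
  by_cases hmem : t :: L ∈ childListsUpTo Γ n (b :: ℓ)
  · have ⟨hsub, hproper⟩ := hmem
    rcases List.sublist_cons_iff.1 hsub with hsub | ⟨r, hr, hsub⟩
    · have hL : t :: L ∈ childListsUpTo Γ n ℓ := ⟨hsub, hproper⟩
      rw [Set.indicator_of_mem hmem, Set.indicator_of_mem hL]
      exact le_self_add
    · simp only [List.map_cons, List.cons.injEq] at hr
      obtain ⟨hroot, rfl⟩ := hr
      have ht : t ∈ properUpTo Γ n b := ⟨(hproper t (by simp)).1, hroot, (hproper t (by simp)).2⟩
      have hL : L ∈ childListsUpTo Γ n ℓ := ⟨hsub, fun s hs => hproper s (by simp [hs])⟩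
      rw [Set.indicator_of_mem hmem, Set.indicator_of_mem ht, Set.indicator_of_mem hL,
        weightList, ENNReal.ofReal_mul (weight_nonneg hw t)]
      exact le_add_self
  · rw [Set.indicator_of_notMem hmem]
    exact zero_le

theorem childWeightSum_cons_le (hw : ∀ a, 0 ≤ w a) (n : ℕ) (b : 𝒜) (ℓ : List 𝒜) :
    childWeightSum Γ w n (b :: ℓ) ≤ (1 + weightSumUpTo Γ w n b) * childWeightSum Γ w n ℓ := by
  set F := fun ℓ => (childListsUpTo Γ n ℓ).indicator fun L => ENNReal.ofReal (weightList w L)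
  set T := (properUpTo Γ n b).indicator fun t => ENNReal.ofReal (t.weight w)
  calc childWeightSum Γ w n (b :: ℓ)
      = F (b :: ℓ) [] + ∑' p : WTree 𝒜 × List (WTree 𝒜), F (b :: ℓ) (p.1 :: p.2) :=
        ENNReal.tsum_list_eq_add _
    _ ≤ F ℓ [] + ∑' p : WTree 𝒜 × List (WTree 𝒜), (F ℓ (p.1 :: p.2) + T p.1 * F ℓ p.2) := by
        gcongr with p
        · simp only [F, Set.indicator_of_mem (nil_mem_childListsUpTo Γ n _), le_refl]
        · exact childListsUpTo_cons_indicator_le Γ w hw n b ℓ p.1 p.2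
    _ = childWeightSum Γ w n ℓ + weightSumUpTo Γ w n b * childWeightSum Γ w n ℓ := by
        rw [ENNReal.tsum_add, ← add_assoc, ← ENNReal.tsum_list_eq_add,
          ENNReal.tsum_prod (f := fun t L => T t * F ℓ L)]
        simp only [ENNReal.tsum_mul_left, ENNReal.tsum_mul_right]
        rfl
    _ = (1 + weightSumUpTo Γ w n b) * childWeightSum Γ w n ℓ := by ring

theorem childWeightSum_le_prod (hw : ∀ a, 0 ≤ w a) (n : ℕ) :
    ∀ ℓ : List 𝒜, childWeightSum Γ w n ℓ ≤ (ℓ.map fun c => 1 + weightSumUpTo Γ w n c).prod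
  | [] => (childWeightSum_nil Γ w n).le
  | b :: ℓ => (childWeightSum_cons_le Γ w hw n b ℓ).trans
      (by rw [List.map_cons, List.prod_cons]; gcongr; exact childWeightSum_le_prod hw n ℓ)

theorem weightSumUpTo_le_of_mul_prod_le (hw : ∀ a, 0 ≤ w a) {B : 𝒜 → ℝ≥0∞}
    (hB : ∀ A, ENNReal.ofReal (w A) * ∏ c ∈ insert A (Γ A), (1 + B c) ≤ B A) :
    ∀ n A, weightSumUpTo Γ w n A ≤ B A := by
  intro n
  induction n with
  | zero => exact fun A => (weightSumUpTo_zero Γ w A).trans_le zero_le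
  | succ n ih =>
    intro A
    calc weightSumUpTo Γ w (n + 1) A
        ≤ ENNReal.ofReal (w A) * childWeightSum Γ w n ((insert A (Γ A)).sort) := by
          exact weightSumUpTo_succ_le Γ w (hw A)
      _ ≤ ENNReal.ofReal (w A) *
            (((insert A (Γ A)).sort).map fun c => 1 + weightSumUpTo Γ w n c).prod := by
          gcongr
          exact childWeightSum_le_prod Γ w hw n _
      _ = ENNReal.ofReal (w A) * ∏ c ∈ insert A (Γ A), (1 + weightSumUpTo Γ w n c) := by
          rw [← List.prod_toFinset _ (Finset.sort_nodup _ _), Finset.sort_toFinset]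
      _ ≤ ENNReal.ofReal (w A) * ∏ c ∈ insert A (Γ A), (1 + B c) := by
          gcongr with c
          exact ih c
      _ ≤ B A := hB A

theorem tsum_proper_le_of_mul_prod_le (hw : ∀ a, 0 ≤ w a) {B : 𝒜 → ℝ≥0∞}
    (hB : ∀ A, ENNReal.ofReal (w A) * ∏ c ∈ insert A (Γ A), (1 + B c) ≤ B A) (A : 𝒜) :
    ∑' τ : {τ : WTree 𝒜 // Proper Γ τ ∧ τ.label = A}, ENNReal.ofReal (τ.1.weight w) ≤ B A := by
  refine tsum_le_of_sum_le' zero_le fun s => ?_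
  set n := s.sup fun τ => τ.1.depth
  have hmem : ∀ τ ∈ s, τ.1 ∈ properUpTo Γ n A := fun τ hτ =>
    ⟨τ.2.1, τ.2.2, Finset.le_sup (f := fun τ => τ.1.depth) hτ⟩
  calc ∑ τ ∈ s, ENNReal.ofReal (τ.1.weight w)
      = ∑ τ ∈ s, (properUpTo Γ n A).indicator (fun t => ENNReal.ofReal (t.weight w)) τ.1 :=
        Finset.sum_congr rfl fun τ hτ =>
          (Set.indicator_of_mem (hmem τ hτ) fun t => ENNReal.ofReal (t.weight w)).symm
    _ ≤ weightSumUpTo Γ w n A :=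
        (ENNReal.sum_le_tsum s).trans
          (ENNReal.tsum_comp_le_tsum_of_injective Subtype.val_injective _)
    _ ≤ B A := weightSumUpTo_le_of_mul_prod_le Γ w hw hB n A

end WTree

theorem ofReal_mul_prod_one_sub_mul_prod_one_add {ι : Type*} [DecidableEq ι] {s : Finset ι}
    {a : ι} (ha : a ∉ s) {x : ι → ℝ} (hx : ∀ i, x i ∈ Set.Ioo (0 : ℝ) 1) :
    ENNReal.ofReal (x a * ∏ i ∈ s, (1 - x i)) *
        ∏ i ∈ insert a s, (1 + ENNReal.ofReal (x i / (1 - x i))) =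
      ENNReal.ofReal (x a / (1 - x a)) := by
  have hpos : ∀ i, 0 < 1 - x i := fun i => sub_pos.2 (hx i).2
  have hone_add : ∀ i, 1 + ENNReal.ofReal (x i / (1 - x i)) = ENNReal.ofReal (1 - x i)⁻¹ := by
    intro i
    rw [← ENNReal.ofReal_one, ← ENNReal.ofReal_add zero_le_one
      (div_nonneg (hx i).1.le (hpos i).le)]
    congr 1
    field_simp [(hpos i).ne']
    ring
  rw [Finset.prod_congr rfl fun i _ => hone_add i,
    ← ENNReal.ofReal_prod_of_nonneg fun i _ => (inv_pos.2 (hpos i)).le,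
    ← ENNReal.ofReal_mul (mul_nonneg (hx a).1.le (Finset.prod_nonneg fun i _ => (hpos i).le)),
    Finset.prod_insert ha, Finset.prod_inv_distrib]
  have hprod : (∏ i ∈ s, (1 - x i)) ≠ 0 := (Finset.prod_pos fun i _ => hpos i).ne'
  field_simp [(hpos a).ne', hprod]

/-- **Galton–Watson bound for witness trees (Moser–Tardos).**
For a finite set `𝒜` with a symmetric irreflexive neighborhood relation `Γ`,
`x : 𝒜 → (0,1)` and `x' B = x B · ∏_{C ∈ Γ B} (1 - x C)`, the sum over all
proper witness trees rooted at `A` of the weight `∏_{v ∈ V(τ)} x' ([v])` is at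
most `x A / (1 - x A)`. -/
theorem galton_watson_witness_tree_bound
    (𝒜 : Type) [Fintype 𝒜] [LinearOrder 𝒜]
    (Γ : 𝒜 → Finset 𝒜) (hirr : ∀ A, A ∉ Γ A)
    (hsym : ∀ A B, B ∈ Γ A ↔ A ∈ Γ B)
    (x : 𝒜 → ℝ) (hx : ∀ A, x A ∈ Set.Ioo (0 : ℝ) 1)
    (x' : 𝒜 → ℝ) (hx' : ∀ A, x' A = x A * ∏ B ∈ Γ A, (1 - x B))
    (A : 𝒜) :
    ∑' τ : {τ : WTree 𝒜 // WTree.Proper Γ τ ∧ τ.label = A},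
        ENNReal.ofReal (WTree.weight x' τ.1)
      ≤ ENNReal.ofReal (x A / (1 - x A)) := by
  have hx'_nonneg : ∀ A, 0 ≤ x' A := fun A => by
    rw [hx' A]
    exact mul_nonneg (hx A).1.le (Finset.prod_nonneg fun B _ => sub_nonneg.2 (hx B).2.le)
  refine WTree.tsum_proper_le_of_mul_prod_le Γ x' hx'_nonneg
    (B := fun A => ENNReal.ofReal (x A / (1 - x A))) (fun A => ?_) A
  rw [hx' A, ofReal_mul_prod_one_sub_mul_prod_one_add (hirr A) hx]
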